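/- Decentralized Coloring with adversarial initial coloring and adversarial choice of conflicted vertices converges to a proper (Δ+1)-coloring of any n-vertex graph G of maximum degree Δ in at most (n-1)(Δ+1) expected recolorings. -/

import Mathlib

open SimpleGraph Finset

open SimpleGraph Finset

section Graph
variable {V : Type*}

/-- Number of connected components. -/
noncomputable def ccount (H : SimpleGraph V) : ℕ := Nat.card H.ConnectedComponent

lemma ccount_le_of_le [Finite V] {H H' : SimpleGraph V} (h : H ≤ H') :
    ccount H' ≤ ccount H := by
  apply Nat.card_le_card_of_surjective
    (SimpleGraph.ConnectedComponent.map (SimpleGraph.Hom.ofLE h))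
  intro K
  refine K.ind fun v => ⟨H.connectedComponentMk v, ?_⟩
  simp [SimpleGraph.ConnectedComponent.map_mk]

lemma ccount_le_card [Finite V] (H : SimpleGraph V) : ccount H ≤ Nat.card V :=
  Nat.card_le_card_of_surjective H.connectedComponentMk (Quot.mk_surjective)

lemma one_le_ccount [Finite V] [Nonempty V] (H : SimpleGraph V) : 1 ≤ ccount H := by
  have : Nonempty H.ConnectedComponent := ⟨H.connectedComponentMk (Classical.arbitrary V)⟩
  exact Nat.card_pos

lemma not_reachable_of_isolated {H : SimpleGraph V} {v u : V}
    (hv : ∀ w, ¬ H.Adj v w) (hne : u ≠ v) : ¬ H.Reachable v u := by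
  intro h
  obtain ⟨w⟩ := h
  cases w with
  | nil => exact hne rfl
  | cons hadj _ => exact hv _ hadj

lemma ccount_lt [Finite V] {H H' : SimpleGraph V} (h : H ≤ H') {a b : V}
    (hr : ¬ H.Reachable a b) (hadj : H'.Adj a b) : ccount H' < ccount H := by
  classical
  letI := Fintype.ofFinite V
  letI : Fintype H.ConnectedComponent := Fintype.ofFinite _
  letI : Fintype H'.ConnectedComponent := Fintype.ofFinite _
  rw [ccount, ccount, Nat.card_eq_fintype_card, Nat.card_eq_fintype_card]
  apply Fintype.card_lt_of_surjective_not_injective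
    (SimpleGraph.ConnectedComponent.map (SimpleGraph.Hom.ofLE h))
  · intro K
    refine K.ind fun v => ⟨H.connectedComponentMk v, ?_⟩
    simp [SimpleGraph.ConnectedComponent.map_mk]
  · intro hinj
    apply hr
    rw [← SimpleGraph.ConnectedComponent.eq]
    apply hinj
    simp only [SimpleGraph.ConnectedComponent.map_mk]
    exact SimpleGraph.ConnectedComponent.eq.mpr hadj.reachable

lemma reachable_sup_edge {H : SimpleGraph V} {a b x y : V}
    (h : (H ⊔ SimpleGraph.edge a b).Reachable x y) :
    H.Reachable x y ∨ (H.Reachable x a ∧ H.Reachable b y)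
      ∨ (H.Reachable x b ∧ H.Reachable a y) := by
  obtain ⟨w⟩ := h
  induction w with
  | nil => exact Or.inl (Reachable.refl _)
  | @cons x z y hadj p ih =>
    rcases (SimpleGraph.sup_adj _ _ _ _).mp hadj with h1 | h1
    · rcases ih with h2 | ⟨h2, h3⟩ | ⟨h2, h3⟩
      · exact Or.inl (h1.reachable.trans h2)
      · exact Or.inr (Or.inl ⟨h1.reachable.trans h2, h3⟩)
      · exact Or.inr (Or.inr ⟨h1.reachable.trans h2, h3⟩)
    · rw [SimpleGraph.edge_adj] at h1
      rcases h1.1 with ⟨hx, hz⟩ | ⟨hx, hz⟩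
      · subst hx; subst hz
        rcases ih with h2 | ⟨h2, h3⟩ | ⟨h2, h3⟩
        · exact Or.inr (Or.inl ⟨Reachable.refl _, h2⟩)
        · exact Or.inr (Or.inl ⟨Reachable.refl _, h3⟩)
        · exact Or.inl h3
      · subst hx; subst hz
        rcases ih with h2 | ⟨h2, h3⟩ | ⟨h2, h3⟩
        · exact Or.inr (Or.inr ⟨Reachable.refl _, h2⟩)
        · exact Or.inl h3
        · exact Or.inr (Or.inr ⟨Reachable.refl _, h3⟩)

lemma ccount_le_sup_edge [Finite V] (H : SimpleGraph V) (a b : V) :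
    ccount H ≤ ccount (H ⊔ SimpleGraph.edge a b) + 1 := by
  classical
  letI := Fintype.ofFinite V
  letI : Fintype H.ConnectedComponent := Fintype.ofFinite _
  letI : Fintype (H ⊔ SimpleGraph.edge a b).ConnectedComponent := Fintype.ofFinite _
  set φ := SimpleGraph.ConnectedComponent.map
    (SimpleGraph.Hom.ofLE (le_sup_left : H ≤ H ⊔ SimpleGraph.edge a b)) with hφ
  have key : ∀ K L : H.ConnectedComponent, φ K = φ L →
      K = L ∨ (K = H.connectedComponentMk a ∧ L = H.connectedComponentMk b)
        ∨ (K = H.connectedComponentMk b ∧ L = H.connectedComponentMk a) := by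
    refine SimpleGraph.ConnectedComponent.ind₂ ?_
    intro x y hxy
    simp only [hφ, SimpleGraph.ConnectedComponent.map_mk,
      SimpleGraph.Hom.ofLE] at hxy
    have hre : (H ⊔ SimpleGraph.edge a b).Reachable x y :=
      SimpleGraph.ConnectedComponent.eq.mp hxy
    rcases reachable_sup_edge hre with h | ⟨h1, h2⟩ | ⟨h1, h2⟩
    · exact Or.inl (SimpleGraph.ConnectedComponent.eq.mpr h)
    · exact Or.inr (Or.inl ⟨SimpleGraph.ConnectedComponent.eq.mpr h1,
        SimpleGraph.ConnectedComponent.eq.mpr h2.symm⟩)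
    · exact Or.inr (Or.inr ⟨SimpleGraph.ConnectedComponent.eq.mpr h1,
        SimpleGraph.ConnectedComponent.eq.mpr h2.symm⟩)
  rw [ccount, ccount, Nat.card_eq_fintype_card, Nat.card_eq_fintype_card]
  have h1 : (Finset.univ.erase (H.connectedComponentMk b)).card
      ≤ Fintype.card (H ⊔ SimpleGraph.edge a b).ConnectedComponent := by
    rw [← Finset.card_univ (α := (H ⊔ SimpleGraph.edge a b).ConnectedComponent)]
    apply Finset.card_le_card_of_injOn φ (fun _ _ => Finset.mem_univ _)
    intro K hK L hL hKL
    rcases key K L hKL with h | ⟨_, h2⟩ | ⟨h2, _⟩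
    · exact h
    · exact absurd h2 (Finset.ne_of_mem_erase hL)
    · exact absurd h2 (Finset.ne_of_mem_erase hK)
  have h2 : (Finset.univ.erase (H.connectedComponentMk b)).card + 1
      = Fintype.card H.ConnectedComponent := by
    rw [Finset.card_erase_add_one (Finset.mem_univ _), Finset.card_univ]
  omega

lemma ccount_le_sup_star [Finite V] [DecidableEq V] (H : SimpleGraph V) (v : V)
    (S : Finset V) :
    ccount H ≤ ccount (H ⊔ S.sup fun u => SimpleGraph.edge v u) + S.card := by
  classical
  induction S using Finset.induction_on with
  | empty => simp
  | @insert u S hu ih =>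
    rw [Finset.sup_insert, Finset.card_insert_of_notMem hu]
    have heq : H ⊔ (SimpleGraph.edge v u ⊔ S.sup fun u => SimpleGraph.edge v u)
        = (H ⊔ S.sup fun u => SimpleGraph.edge v u) ⊔ SimpleGraph.edge v u := by
      rw [sup_comm (SimpleGraph.edge v u), ← sup_assoc]
    rw [heq]
    have := ccount_le_sup_edge (H ⊔ S.sup fun u => SimpleGraph.edge v u) v u
    omega

end Graph

section Drift
variable {V : Type*}

/-- The monochromatic subgraph. -/
def monoGraph {D : ℕ} (G : SimpleGraph V) (χ : V → Fin D) : SimpleGraph V where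
  Adj x y := G.Adj x y ∧ χ x = χ y
  symm := ⟨fun x y ⟨h, e⟩ => ⟨h.symm, e.symm⟩⟩
  loopless := ⟨fun x ⟨h, _⟩ => G.loopless.irrefl x h⟩

/-- The monochromatic subgraph with `v` isolated. -/
def monoGraphAvoid {D : ℕ} (G : SimpleGraph V) (χ : V → Fin D) (v : V) : SimpleGraph V where
  Adj x y := (G.Adj x y ∧ χ x = χ y) ∧ x ≠ v ∧ y ≠ v
  symm := ⟨fun x y ⟨⟨h, e⟩, hx, hy⟩ => ⟨⟨h.symm, e.symm⟩, hy, hx⟩⟩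
  loopless := ⟨fun x ⟨⟨h, _⟩, _⟩ => G.loopless.irrefl x h⟩

lemma key_drift [Fintype V] [DecidableEq V] (Δ : ℕ) (G : SimpleGraph V)
    [DecidableRel G.Adj] (hΔ : ∀ w, G.degree w ≤ Δ) (χ : V → Fin (Δ + 1)) (v : V)
    (hv : ∃ u, G.Adj v u ∧ χ u = χ v) :
    (Δ + 1) * ccount (monoGraph G χ) + (Δ + 1)
      ≤ ∑ c : Fin (Δ + 1), ccount (monoGraph G (Function.update χ v c)) + Δ := by
  classical
  set N := monoGraphAvoid G χ v with hN
  -- Step 1 : ccount (monoGraph G χ) < ccount N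
  obtain ⟨u, huv, hcol⟩ := hv
  have hNle : N ≤ monoGraph G χ := fun x y h => h.1
  have hiso : ∀ w, ¬ N.Adj v w := fun w h => h.2.1 rfl
  have huvne : u ≠ v := fun h => G.loopless.irrefl v (h ▸ huv)
  have hstep1 : ccount (monoGraph G χ) < ccount N :=
    ccount_lt hNle (not_reachable_of_isolated hiso huvne) ⟨huv, hcol.symm⟩
  -- Step 2 : for each color c
  have hstep2 : ∀ c : Fin (Δ + 1),
      ccount N ≤ ccount (monoGraph G (Function.update χ v c))
        + ((G.neighborFinset v).filter fun u => χ u = c).card := by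
    intro c
    set S := (G.neighborFinset v).filter fun u => χ u = c with hS
    have hle : monoGraph G (Function.update χ v c) ≤ N ⊔ S.sup fun u => SimpleGraph.edge v u := by
      intro x y ⟨hadj, heq⟩
      by_cases hx : x = v
      · subst hx
        have hy : y ≠ x := (G.ne_of_adj hadj).symm
        have hyc : χ y = c := by
          rw [Function.update_self, Function.update_of_ne hy] at heq
          exact heq.symm
        have hyS : y ∈ S := by
          rw [hS, Finset.mem_filter, SimpleGraph.mem_neighborFinset]
          exact ⟨hadj, hyc⟩
        refine Or.inr ?_
        refine Finset.le_sup (f := fun u => SimpleGraph.edge x u) hyS ?_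
        rw [SimpleGraph.edge_adj]
        exact ⟨Or.inl ⟨rfl, rfl⟩, hy.symm⟩
      · by_cases hy : y = v
        · subst hy
          have hxc : χ x = c := by
            rw [Function.update_self, Function.update_of_ne hx] at heq
            exact heq
          have hxS : x ∈ S := by
            rw [hS, Finset.mem_filter, SimpleGraph.mem_neighborFinset]
            exact ⟨hadj.symm, hxc⟩
          refine Or.inr ?_
          refine Finset.le_sup (f := fun u => SimpleGraph.edge y u) hxS ?_
          rw [SimpleGraph.edge_adj]
          exact ⟨Or.inr ⟨rfl, rfl⟩, hx⟩
        · refine Or.inl ⟨⟨hadj, ?_⟩, hx, hy⟩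
          rwa [Function.update_of_ne hx, Function.update_of_ne hy] at heq
    calc ccount N ≤ ccount (N ⊔ S.sup fun u => SimpleGraph.edge v u) + S.card :=
          ccount_le_sup_star N v S
      _ ≤ ccount (monoGraph G (Function.update χ v c)) + S.card := by
          have := ccount_le_of_le hle
          omega
  -- Step 3 : the fibers partition the neighborhood
  have hstep3 : ∑ c : Fin (Δ + 1),
      ((G.neighborFinset v).filter fun u => χ u = c).card = G.degree v := by
    rw [SimpleGraph.degree]
    exact (Finset.card_eq_sum_card_fiberwise (f := χ) (fun x _ => Finset.mem_univ _)).symm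
  have hdeg : G.degree v ≤ Δ := hΔ v
  have hsum : (Δ + 1) * ccount N
      ≤ ∑ c : Fin (Δ + 1), ccount (monoGraph G (Function.update χ v c)) + G.degree v := by
    calc (Δ + 1) * ccount N = ∑ _c : Fin (Δ + 1), ccount N := by
          rw [Finset.sum_const, Finset.card_univ, Fintype.card_fin, smul_eq_mul]
      _ ≤ ∑ c : Fin (Δ + 1), (ccount (monoGraph G (Function.update χ v c))
            + ((G.neighborFinset v).filter fun u => χ u = c).card) :=
          Finset.sum_le_sum fun c _ => hstep2 c
      _ = _ := by rw [Finset.sum_add_distrib, hstep3]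
  have : (Δ + 1) * (ccount (monoGraph G χ) + 1) ≤ (Δ + 1) * ccount N :=
    Nat.mul_le_mul_left _ hstep1
  nlinarith [this, hsum, hdeg]

end Drift

/-- `χ` is a proper coloring of `G`. -/
def properColoring {V : Type*} {D : ℕ} (G : SimpleGraph V) (χ : V → Fin D) : Prop :=
  ∀ v w, G.Adj v w → χ v ≠ χ w

/-- One step of Decentralized Coloring with adversary `A`: if the coloring is improper,
the adversarially chosen conflicted vertex `A χ` is recolored to the (random) color `c`;
once proper, nothing changes. -/
noncomputable def advStep {V : Type*} {D : ℕ} (G : SimpleGraph V)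
    (A : (V → Fin D) → V) (χ : V → Fin D) (c : Fin D) : V → Fin D :=
  letI : DecidableEq V := Classical.decEq V
  letI : Decidable (properColoring G χ) := Classical.propDecidable _
  if properColoring G χ then χ else Function.update χ (A χ) c

/-- The coloring after consuming the list `l` of random colors. -/
noncomputable def advRun {V : Type*} {D : ℕ} (G : SimpleGraph V)
    (A : (V → Fin D) → V) (χ0 : V → Fin D) (l : List (Fin D)) : V → Fin D :=
  l.foldl (advStep G A) χ0


section Prob
variable {V : Type*}

noncomputable def Ncount {D : ℕ} (G : SimpleGraph V) (A : (V → Fin D) → V)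
    (t : ℕ) (χ : V → Fin D) : ℕ :=
  Nat.card {f : Fin t → Fin D // ¬ properColoring G (advRun G A χ (List.ofFn f))}

lemma advRun_nil {D : ℕ} (G : SimpleGraph V) (A : (V → Fin D) → V) (χ : V → Fin D) :
    advRun G A χ [] = χ := rfl

lemma Ncount_zero_proper {D : ℕ} (G : SimpleGraph V) (A : (V → Fin D) → V)
    (χ : V → Fin D) (h : properColoring G χ) : Ncount G A 0 χ = 0 := by
  have : IsEmpty {f : Fin 0 → Fin D // ¬ properColoring G (advRun G A χ (List.ofFn f))} :=
    ⟨fun ⟨f, hf⟩ => hf (by simpa [List.ofFn_zero, advRun_nil] using h)⟩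
  exact Nat.card_of_isEmpty

lemma Ncount_zero_improper {D : ℕ} (G : SimpleGraph V) (A : (V → Fin D) → V)
    (χ : V → Fin D) (h : ¬ properColoring G χ) : Ncount G A 0 χ = 1 := by
  rw [Ncount, Nat.card_congr (Equiv.subtypeUnivEquiv fun f => by
    simpa [List.ofFn_zero, advRun_nil] using h)]
  exact Nat.card_unique

lemma Ncount_succ {D : ℕ} (G : SimpleGraph V) (A : (V → Fin D) → V)
    (t : ℕ) (χ : V → Fin D) :
    Ncount G A (t + 1) χ = ∑ c : Fin D, Ncount G A t (advStep G A χ c) := by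
  classical
  have hrun : ∀ f : Fin (t + 1) → Fin D,
      advRun G A χ (List.ofFn f)
        = advRun G A (advStep G A χ (f 0)) (List.ofFn (Fin.tail f)) := by
    intro f
    rw [List.ofFn_succ]
    rfl
  have e : {f : Fin (t + 1) → Fin D // ¬ properColoring G (advRun G A χ (List.ofFn f))}
      ≃ Σ c : Fin D, {g : Fin t → Fin D //
          ¬ properColoring G (advRun G A (advStep G A χ c) (List.ofFn g))} :=
    { toFun := fun f => ⟨f.1 0, Fin.tail f.1, by rw [← hrun]; exact f.2⟩
      invFun := fun p => ⟨Fin.cons p.1 p.2.1, by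
        rw [hrun]
        simpa [Fin.cons_zero, Fin.tail_cons] using p.2.2⟩
      left_inv := fun f => Subtype.ext (Fin.cons_self_tail f.1)
      right_inv := fun p => rfl }
  simp only [Ncount]
  rw [Nat.card_congr e]
  letI : ∀ c : Fin D, Fintype {g : Fin t → Fin D //
      ¬ properColoring G (advRun G A (advStep G A χ c) (List.ofFn g))} :=
    fun c => Fintype.ofFinite _
  rw [Nat.card_eq_fintype_card, Fintype.card_sigma]
  exact Finset.sum_congr rfl fun c _ => (Nat.card_eq_fintype_card).symm

lemma partial_bound [Fintype V] (Δ : ℕ) (G : SimpleGraph V) [DecidableRel G.Adj]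
    (hΔ : ∀ w, G.degree w ≤ Δ) (A : (V → Fin (Δ + 1)) → V)
    (hA : ∀ χ, ¬ properColoring G χ → ∃ u, G.Adj (A χ) u ∧ χ u = χ (A χ))
    (T : ℕ) (χ : V → Fin (Δ + 1)) :
    ∑ t ∈ Finset.range T, (Ncount G A t χ : ℝ) / ((Δ : ℝ) + 1) ^ t
      ≤ ((Δ : ℝ) + 1) * ((Fintype.card V : ℝ) - ccount (monoGraph G χ)) := by
  letI : DecidableEq V := Classical.decEq V
  have hq : (0 : ℝ) < (Δ : ℝ) + 1 := by positivity
  induction T generalizing χ with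
  | zero =>
    simp only [Finset.range_zero, Finset.sum_empty]
    have h1 : (ccount (monoGraph G χ) : ℝ) ≤ (Fintype.card V : ℝ) := by
      exact_mod_cast (ccount_le_card (monoGraph G χ)).trans_eq Nat.card_eq_fintype_card
    have := mul_nonneg hq.le (sub_nonneg.mpr h1)
    linarith
  | succ T ih =>
    have hswap : ∑ t ∈ Finset.range T, (Ncount G A (t + 1) χ : ℝ) / ((Δ : ℝ) + 1) ^ (t + 1)
        = (∑ c : Fin (Δ + 1), ∑ t ∈ Finset.range T,
            (Ncount G A t (advStep G A χ c) : ℝ) / ((Δ : ℝ) + 1) ^ t) / ((Δ : ℝ) + 1) := by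
      calc ∑ t ∈ Finset.range T, (Ncount G A (t + 1) χ : ℝ) / ((Δ : ℝ) + 1) ^ (t + 1)
          = ∑ t ∈ Finset.range T, ∑ c : Fin (Δ + 1),
              (Ncount G A t (advStep G A χ c) : ℝ) / ((Δ : ℝ) + 1) ^ t / ((Δ : ℝ) + 1) := by
            refine Finset.sum_congr rfl fun t _ => ?_
            rw [Ncount_succ]
            push_cast
            rw [Finset.sum_div]
            exact Finset.sum_congr rfl fun c _ => by rw [pow_succ, ← div_div]
        _ = ∑ c : Fin (Δ + 1), ∑ t ∈ Finset.range T,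
              (Ncount G A t (advStep G A χ c) : ℝ) / ((Δ : ℝ) + 1) ^ t / ((Δ : ℝ) + 1) :=
            Finset.sum_comm
        _ = _ := by
            rw [Finset.sum_div]
            exact Finset.sum_congr rfl fun c _ => (Finset.sum_div _ _ _).symm
    rw [Finset.sum_range_succ', hswap]
    by_cases hχ : properColoring G χ
    · have h0 : Ncount G A 0 χ = 0 := Ncount_zero_proper G A χ hχ
      have hstep : ∀ c : Fin (Δ + 1), advStep G A χ c = χ := by
        intro c; simp [advStep, hχ]
      simp only [hstep, h0, Nat.cast_zero, pow_zero, zero_div, add_zero,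
        Finset.sum_const, Finset.card_univ, Fintype.card_fin, nsmul_eq_mul]
      rw [Nat.cast_add, Nat.cast_one, mul_comm, mul_div_cancel_right₀ _ hq.ne']
      exact ih χ
    · have h0 : Ncount G A 0 χ = 1 := Ncount_zero_improper G A χ hχ
      have hstep : ∀ c : Fin (Δ + 1),
          advStep G A χ c = Function.update χ (A χ) c := by
        intro c; simp [advStep, hχ]
      have hkey := key_drift Δ G hΔ χ (A χ) (hA χ hχ)
      have hkeyR : ((Δ : ℝ) + 1) * (ccount (monoGraph G χ) : ℝ) + ((Δ : ℝ) + 1)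
          ≤ (∑ c : Fin (Δ + 1),
              (ccount (monoGraph G (Function.update χ (A χ) c)) : ℝ)) + (Δ : ℝ) := by
        exact_mod_cast hkey
      simp only [hstep, h0, Nat.cast_one, pow_zero, div_one]
      calc (∑ c : Fin (Δ + 1), ∑ t ∈ Finset.range T,
              (Ncount G A t (Function.update χ (A χ) c) : ℝ) / ((Δ : ℝ) + 1) ^ t)
              / ((Δ : ℝ) + 1) + 1
          ≤ (∑ c : Fin (Δ + 1), ((Δ : ℝ) + 1) * ((Fintype.card V : ℝ)
              - ccount (monoGraph G (Function.update χ (A χ) c)))) / ((Δ : ℝ) + 1) + 1 := by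
            gcongr
            exact ih _
        _ = (((Δ : ℝ) + 1) * (Fintype.card V : ℝ) - ∑ c : Fin (Δ + 1),
              (ccount (monoGraph G (Function.update χ (A χ) c)) : ℝ)) + 1 := by
            rw [← Finset.mul_sum, mul_div_cancel_left₀ _ hq.ne', Finset.sum_sub_distrib,
              Finset.sum_const, Finset.card_univ, Fintype.card_fin, nsmul_eq_mul]
            push_cast
            ring
        _ ≤ ((Δ : ℝ) + 1) * ((Fintype.card V : ℝ) - ccount (monoGraph G χ)) := by
            ring_nf
            ring_nf at hkeyR
            linarith

end Prob

/-- Decentralized Coloring with adversarial initial coloring `χ0` and adversarial choice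
`A` of conflicted vertices converges to a proper `(Δ+1)`-coloring in at most
`(n-1)(Δ+1)` expected recolorings.  The expected number of recolorings is expressed as
`∑_{t≥0} P(still improper after t recolorings)`, the probability being over the
uniformly random colors used (a uniform `f : Fin t → Fin (Δ+1)`). -/
theorem stmt_13 {V : Type*} [Fintype V] (n Δ : ℕ) (hn : n = Fintype.card V)
    (G : SimpleGraph V) [DecidableRel G.Adj] (hΔ : ∀ v, G.degree v ≤ Δ)
    (A : (V → Fin (Δ + 1)) → V)
    (hA : ∀ χ, ¬ properColoring G χ → ∃ u, G.Adj (A χ) u ∧ χ u = χ (A χ))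
    (χ0 : V → Fin (Δ + 1)) :
    ∑' t : ℕ, (Nat.card {f : Fin t → Fin (Δ + 1) //
        ¬ properColoring G (advRun G A χ0 (List.ofFn f))} : ℝ) / ((Δ : ℝ) + 1) ^ t
      ≤ ((n : ℝ) - 1) * ((Δ : ℝ) + 1) := by
  have hne : Nonempty V := ⟨A χ0⟩
  have hq : (0 : ℝ) < (Δ : ℝ) + 1 := by positivity
  refine Real.tsum_le_of_sum_range_le (fun t => by positivity) fun T => ?_
  refine le_trans (partial_bound Δ G hΔ A hA T χ0) ?_
  have h1 : (1 : ℝ) ≤ (ccount (monoGraph G χ0) : ℝ) := by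
    exact_mod_cast one_le_ccount (monoGraph G χ0)
  rw [hn]
  have h2 : ((Fintype.card V : ℝ) - ccount (monoGraph G χ0)) ≤ (Fintype.card V : ℝ) - 1 := by
    linarith
  calc ((Δ : ℝ) + 1) * ((Fintype.card V : ℝ) - ccount (monoGraph G χ0))
      ≤ ((Δ : ℝ) + 1) * ((Fintype.card V : ℝ) - 1) := by nlinarith
    _ = ((Fintype.card V : ℝ) - 1) * ((Δ : ℝ) + 1) := mul_comm _ _
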